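/- For every natural number n, 108^n · ∑_{k=0}^n C(−1/3, k)·C(−1/6, k)·C(−1/3, n−k)·C(−1/6, n−k) = C(2n, n)² · C(3n, n), where on the right-hand side C(m, k) denotes the usual integer binomial coefficient. -/

import Mathlib

/-!
Both sides satisfy `(n+1)³ u (n+1) = 6 (2n+1)(3n+1)(3n+2) u n` with `u 0 = 1`. For the
binomial side this is a factorial computation. For the convolution side, put
`a k = 108ᵏ C(-1/3, k) C(-1/6, k)`, so that `(k+1)² a (k+1) = 6 (6k+1)(3k+1) a k`; the
recurrence then follows by creative telescoping with the certificate
`g j = -j² (3n+3-2j) a j a (n+1-j)`.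
-/

/-- Generalized binomial coefficient `C(x, k) = x(x-1)⋯(x-k+1)/k!`. -/
noncomputable def genBinom (x : ℝ) (k : ℕ) : ℝ :=
  (∏ i ∈ Finset.range k, (x - i)) / (Nat.factorial k)

open Finset
open scoped Nat

lemma genBinom_succ (x : ℝ) (k : ℕ) :
    ((k : ℝ) + 1) * genBinom x (k + 1) = (x - k) * genBinom x k := by
  simp only [genBinom, prod_range_succ, Nat.factorial_succ, Nat.cast_mul, Nat.cast_succ]
  field_simp

lemma eq_of_succ_rec_of_zero_eq {u v p q : ℕ → ℝ} (hp : ∀ n, p n ≠ 0)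
    (hu : ∀ n, p n * u (n + 1) = q n * u n) (hv : ∀ n, p n * v (n + 1) = q n * v n)
    (h0 : u 0 = v 0) (n : ℕ) : u n = v n := by
  induction n with
  | zero => exact h0
  | succ n ih => exact mul_left_cancel₀ (hp n) (by rw [hu, hv, ih])

def selfConvolution (a : ℕ → ℝ) (n : ℕ) : ℝ :=
  ∑ k ∈ range (n + 1), a k * a (n - k)

lemma selfConvolution_succ_rec {a : ℕ → ℝ}
    (ha : ∀ k : ℕ, ((k : ℝ) + 1) ^ 2 * a (k + 1) = 6 * (6 * k + 1) * (3 * k + 1) * a k)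
    (n : ℕ) :
    ((n : ℝ) + 1) ^ 3 * selfConvolution a (n + 1)
      = 6 * (2 * (n : ℝ) + 1) * (3 * n + 1) * (3 * n + 2) * selfConvolution a n := by
  set g : ℕ → ℝ := fun j ↦ -(j : ℝ) ^ 2 * (3 * n + 3 - 2 * j) * (a j * a (n + 1 - j))
    with hg
  have step : ∀ k ∈ range (n + 1),
      ((n : ℝ) + 1) ^ 3 * (a k * a (n + 1 - k))
        - 6 * (2 * (n : ℝ) + 1) * (3 * n + 1) * (3 * n + 2) * (a k * a (n - k))
      = g (k + 1) - g k := by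
    intro k hk
    obtain ⟨m, rfl⟩ : ∃ m, n = k + m := ⟨n - k, by grind⟩
    simp only [hg, show k + m + 1 - k = m + 1 by omega, show k + m - k = m by omega,
      show k + m + 1 - (k + 1) = m by omega]
    push_cast
    -- `(n+1)³ - k² (3n+3-2k) = (m+1)² (n+1+2k)` lets `ha m` absorb the `a k * a (m+1)` terms
    linear_combination (k + m + 1 + 2 * k : ℝ) * a k * ha m
      + (3 * (k + m) + 1 - 2 * k : ℝ) * a m * ha k
  have telescoped := sum_congr rfl step
  rw [sum_sub_distrib, sum_range_sub, ← mul_sum, ← mul_sum] at telescoped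
  simp only [hg, Nat.sub_self, Nat.sub_zero, CharP.cast_eq_zero] at telescoped
  rw [selfConvolution, selfConvolution, sum_range_succ, Nat.sub_self]
  push_cast at telescoped
  linear_combination telescoped

noncomputable def scaledGenBinomProd (k : ℕ) : ℝ :=
  108 ^ k * genBinom (-1/3) k * genBinom (-1/6) k

lemma scaledGenBinomProd_succ (k : ℕ) :
    ((k : ℝ) + 1) ^ 2 * scaledGenBinomProd (k + 1)
      = 6 * (6 * k + 1) * (3 * k + 1) * scaledGenBinomProd k := by
  unfold scaledGenBinomProd
  linear_combination
    (108 ^ (k + 1) * ((k : ℝ) + 1) * genBinom (-1/6) (k + 1)) * genBinom_succ (-1/3) k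
    + (108 ^ (k + 1) * (-1/3 - k) * genBinom (-1/3) k) * genBinom_succ (-1/6) k

lemma choose_sq_mul_choose_mul_factorial_pow (n : ℕ) :
    (2 * n).choose n ^ 2 * (3 * n).choose n * n ! ^ 5 = (2 * n)! * (3 * n)! := by
  have h2 := Nat.choose_mul_factorial_mul_factorial (show n ≤ 2 * n by omega)
  have h3 := Nat.choose_mul_factorial_mul_factorial (show n ≤ 3 * n by omega)
  rw [show 2 * n - n = n by omega] at h2
  rw [show 3 * n - n = 2 * n by omega] at h3
  apply Nat.eq_of_mul_eq_mul_right (Nat.factorial_pos (2 * n))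
  calc _ = ((2 * n).choose n * n ! * n !) ^ 2 * ((3 * n).choose n * n ! * (2 * n)!) := by ring
    _ = _ := by rw [h2, h3]; ring

lemma choose_sq_mul_choose_succ_rec (n : ℕ) :
    (n + 1) ^ 3 * ((2 * (n + 1)).choose (n + 1) ^ 2 * (3 * (n + 1)).choose (n + 1))
      = 6 * (2 * n + 1) * (3 * n + 1) * (3 * n + 2)
        * ((2 * n).choose n ^ 2 * (3 * n).choose n) := by
  apply Nat.eq_of_mul_eq_mul_right (by positivity : 0 < (n + 1) ^ 2 * n ! ^ 5)
  calc _ = (2 * (n + 1)).choose (n + 1) ^ 2 * (3 * (n + 1)).choose (n + 1) * (n + 1)! ^ 5 := by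
          rw [Nat.factorial_succ]; ring
    _ = (2 * n + 2)! * (3 * n + 3)! := choose_sq_mul_choose_mul_factorial_pow (n + 1)
    _ = (2 * n + 2) * (2 * n + 1) * (3 * n + 3) * (3 * n + 2) * (3 * n + 1)
          * ((2 * n)! * (3 * n)!) := by
          simp only [Nat.factorial_succ]; ring
    _ = _ := by rw [← choose_sq_mul_choose_mul_factorial_pow n]; ring

theorem lemma_108 (n : ℕ) :
    108 ^ n * ∑ k ∈ Finset.range (n + 1),
        genBinom (-1/3) k * genBinom (-1/6) k *
          genBinom (-1/3) (n - k) * genBinom (-1/6) (n - k)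
      = ((2 * n).choose n : ℝ) ^ 2 * ((3 * n).choose n : ℝ) := by
  have lhs_eq : 108 ^ n * ∑ k ∈ Finset.range (n + 1),
        genBinom (-1/3) k * genBinom (-1/6) k * genBinom (-1/3) (n - k) * genBinom (-1/6) (n - k)
      = selfConvolution scaledGenBinomProd n := by
    rw [selfConvolution, mul_sum]
    refine sum_congr rfl fun k hk ↦ ?_
    rw [show n = k + (n - k) by grind, pow_add, Nat.add_sub_cancel_left]
    simp only [scaledGenBinomProd]
    ring
  rw [lhs_eq]
  refine eq_of_succ_rec_of_zero_eq (v := fun n ↦ ((2 * n).choose n : ℝ) ^ 2 * (3 * n).choose n)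
    (fun n ↦ by positivity)
    (selfConvolution_succ_rec scaledGenBinomProd_succ) (fun n ↦ ?_) ?_ n
  · exact_mod_cast choose_sq_mul_choose_succ_rec n
  · simp [selfConvolution, scaledGenBinomProd, genBinom]
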